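/- arXiv:2602.21204 — 2 statements merged into one kernel-verified Lean document; each statement's English description precedes it below -/
import Mathlib

section
/- For the GLU f(x) = silu(xW₀) ⊙ (xW₁) with loss L = −⟨f(k), v⟩, the gradient with respect to W₁ is ∇_{W₁}L = −k^T (v ⊙ silu(kW₀)). Thus a gradient step W₁' = W₁ + η k^T (v ⊙ silu(kW₀)) yields, for any query q and updated W₀', the output o = silu(qW₀') ⊙ (q(W₁ + η k^T(v ⊙ silu(kW₀)))), a gated linear-attention form with value v ⊙ silu(kW₀). -/
/- STATEMENT 9: For the GLU f(x) = silu(xW₀) ⊙ (xW₁) with L = −⟨f(k), v⟩, the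
   gradient w.r.t. W₁ is ∇_{W₁}L = −kᵀ (v ⊙ silu(kW₀)); the updated output is the
   gated linear-attention form o = silu(qW₀') ⊙ (q(W₁ + η kᵀ(v ⊙ silu(kW₀)))). -/

attribute [local instance] Matrix.normedAddCommGroup Matrix.normedSpace

open Matrix Finset

noncomputable def silu (z : ℝ) : ℝ := z / (1 + Real.exp (-z))

noncomputable def siluM {m n : Type*} (M : Matrix m n ℝ) : Matrix m n ℝ := M.map silu

noncomputable def lossLM (D : ℕ) (k v : Matrix (Fin 1) (Fin D) ℝ)
    (W₀ : Matrix (Fin D) (Fin D) ℝ) :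
    Matrix (Fin D) (Fin D) ℝ →ₗ[ℝ] ℝ where
  toFun W := -(∑ j, (Matrix.hadamard (siluM (k * W₀)) (k * W)) 0 j * v 0 j)
  map_add' W W' := by
    simp [Matrix.hadamard, Matrix.mul_add, Matrix.add_apply, mul_add, add_mul,
      Finset.sum_add_distrib]
    ring
  map_smul' c W := by
    simp [Matrix.hadamard, Matrix.mul_smul, Matrix.smul_apply, Finset.mul_sum,
      smul_eq_mul, mul_comm, mul_assoc, mul_left_comm]

theorem glu_ttt_is_gated_linear_attention
    (D : ℕ)
    (k q v : Matrix (Fin 1) (Fin D) ℝ)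
    (W₀ W₁ W₀' : Matrix (Fin D) (Fin D) ℝ)   -- W₀' : updated gate weights
    (η : ℝ)
    (L : Matrix (Fin D) (Fin D) ℝ → ℝ)
    (hL : L = fun W => -(∑ j, (Matrix.hadamard (siluM (k * W₀)) (k * W)) 0 j * v 0 j))
    (gradW₁ : Matrix (Fin D) (Fin D) ℝ)
    (hgrad : gradW₁ = -(kᵀ * Matrix.hadamard v (siluM (k * W₀))))
    (W₁' : Matrix (Fin D) (Fin D) ℝ)
    (hupd : W₁' = W₁ - η • gradW₁)
    (o : Matrix (Fin 1) (Fin D) ℝ)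
    (ho : o = Matrix.hadamard (siluM (q * W₀')) (q * W₁')) :
    (∀ H, fderiv ℝ L W₁ H = Matrix.trace (Hᵀ * gradW₁)) ∧
    W₁' = W₁ + η • (kᵀ * Matrix.hadamard v (siluM (k * W₀))) ∧
    o = Matrix.hadamard (siluM (q * W₀'))
          (q * (W₁ + η • (kᵀ * Matrix.hadamard v (siluM (k * W₀))))) := by
  refine ⟨?_, ?_, ?_⟩
  · intro H
    have hLeq : L = ⇑((lossLM D k v W₀).toContinuousLinearMap) := by
      ext W; simp [hL, lossLM]
    have hfd : fderiv ℝ L W₁ = (lossLM D k v W₀).toContinuousLinearMap := by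
      rw [hLeq]
      exact ((lossLM D k v W₀).toContinuousLinearMap.hasFDerivAt).fderiv
    rw [hfd]
    simp only [hgrad, LinearMap.coe_toContinuousLinearMap', lossLM, LinearMap.coe_mk,
      AddHom.coe_mk, Matrix.trace, Matrix.diag, Matrix.mul_apply, Matrix.neg_apply,
      Matrix.hadamard, Matrix.of_apply, Matrix.transpose_apply, siluM, Matrix.map_apply,
      Fin.sum_univ_one]
    rw [← Finset.sum_neg_distrib]
    apply Finset.sum_congr rfl
    intro j _
    rw [Finset.mul_sum, Finset.sum_mul, ← Finset.sum_neg_distrib]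
    apply Finset.sum_congr rfl
    intro i _
    ring
  · rw [hupd, hgrad]; simp [sub_eq_add_neg]
  · rw [ho, hupd, hgrad]; simp [sub_eq_add_neg]
end

section
/- For the depthwise (per-channel) linear convolution, let y_p = Σ_{δ ∈ N} w_δ x_{p+δ} for a fixed finite offset set N, with loss L = −Σ_p ⟨y_p, v_p⟩ (summed entrywise inner products over positions). Then ∂L/∂w_δ = −Σ_p x_{p+δ} ⊙ v_p, and a gradient step w_δ' = w_δ + η Σ_p x_{p+δ} ⊙ v_p makes the updated convolution output at position p equal y_p + η Σ_{δ∈N} Σ_{p'} (x_{p+δ} ⊙ x_{p'+δ}) ⊙ v_{p'}, a sliding-window linear-attention form. -/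
/-!
The convolution is linear in each kernel weight and the loss is linear in the convolution output,
so as a function of the single weight `w δ₀` the loss is affine with slope `-∑ p, x (p + δ₀) ⊙ v p`;
this slope is the gradient. Substituting the gradient step into the convolution and distributing
the sums gives the sliding-window linear-attention form.
-/

open Finset Matrix

section DepthwiseConv

variable {G A : Type*} [Add G]

def depthwiseConv [NonUnitalNonAssocSemiring A] (N : Finset G) (x w : G → A) (p : G) : A :=
  ∑ δ ∈ N, w δ * x (p + δ)

theorem depthwiseConv_update [NonUnitalNonAssocSemiring A] [DecidableEq G] {N : Finset G}
    {δ₀ : G} (hδ₀ : δ₀ ∈ N) (x w : G → A) (u : A) (p : G) :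
    depthwiseConv N x (Function.update w δ₀ u) p
      = u * x (p + δ₀) + depthwiseConv (N.erase δ₀) x w p := by
  rw [depthwiseConv, ← add_sum_erase N _ hδ₀, Function.update_self]
  congr 1
  exact sum_congr rfl fun δ hδ => by rw [Function.update_of_ne (ne_of_mem_erase hδ)]

theorem depthwiseConv_gradient_step {R : Type*} [Semiring R] [CommSemiring A] [Module R A]
    [IsScalarTower R A A] [SMulCommClass R A A] (P N : Finset G) (x v w : G → A) (η : R)
    (p : G) :
    depthwiseConv N x (fun δ => w δ + η • ∑ p' ∈ P, x (p' + δ) * v p') p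
      = depthwiseConv N x w p + η • ∑ δ ∈ N, ∑ p' ∈ P, x (p + δ) * x (p' + δ) * v p' := by
  simp only [depthwiseConv, add_mul, sum_add_distrib, smul_mul_assoc, smul_sum, sum_mul]
  congr 1
  exact sum_congr rfl fun δ _ => sum_congr rfl fun p' _ => by rw [mul_comm, ← mul_assoc]

end DepthwiseConv

section Loss

variable {G ι R : Type*} [Fintype ι]

def correlationLoss [CommRing R] (P : Finset G) (v y : G → ι → R) : R :=
  -∑ p ∈ P, y p ⬝ᵥ v p

theorem correlationLoss_depthwiseConv_update [CommRing R] [Add G] [DecidableEq G]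
    {N : Finset G} {δ₀ : G} (hδ₀ : δ₀ ∈ N) (P : Finset G) (x v w : G → ι → R) (u : ι → R) :
    correlationLoss P v (depthwiseConv N x (Function.update w δ₀ u))
      = (-∑ p ∈ P, x (p + δ₀) * v p) ⬝ᵥ u
        + correlationLoss P v (depthwiseConv (N.erase δ₀) x w) := by
  have slope : ∀ a b : ι → R, (u * a) ⬝ᵥ b = (a * b) ⬝ᵥ u := fun a b =>
    sum_congr rfl fun _ _ => by simp only [Pi.mul_apply]; ring
  simp only [correlationLoss, depthwiseConv_update hδ₀, add_dotProduct, sum_add_distrib, neg_add,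
    neg_dotProduct, sum_dotProduct, slope]

theorem fderiv_dotProduct_add_const {𝕜 : Type*} [NontriviallyNormedField 𝕜] (g : ι → 𝕜)
    (c : 𝕜) (a u : ι → 𝕜) : fderiv 𝕜 (fun u' => g ⬝ᵥ u' + c) a u = g ⬝ᵥ u := by
  let ℓ : (ι → 𝕜) →L[𝕜] 𝕜 := ∑ i, g i • ContinuousLinearMap.proj i
  have hℓ : ∀ u', ℓ u' = g ⬝ᵥ u' := fun u' => by simp [ℓ, dotProduct]
  simp only [← hℓ, fderiv_add_const, ℓ.fderiv]

end Loss

theorem depthwise_conv_ttt_is_sliding_window_linear_attention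
    (C : ℕ)
    (P N : Finset ℤ)                    -- positions and kernel offsets
    (x v : ℤ → (Fin C → ℝ))             -- inputs and targets, channel vectors
    (w : ℤ → (Fin C → ℝ))               -- depthwise kernel weights per offset
    (η : ℝ)
    (y : (ℤ → (Fin C → ℝ)) → ℤ → (Fin C → ℝ))
    (hy : y = fun w' p => ∑ δ ∈ N, w' δ * x (p + δ))     -- depthwise convolution
    (L : (ℤ → (Fin C → ℝ)) → ℝ)
    (hL : L = fun w' => -(∑ p ∈ P, ∑ c, y w' p c * v p c))
    (w' : ℤ → (Fin C → ℝ))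
    (hw' : w' = fun δ => w δ + η • ∑ p ∈ P, x (p + δ) * v p) :
    (∀ δ₀ ∈ N, ∀ u,
        fderiv ℝ (fun u' => L (Function.update w δ₀ u')) (w δ₀) u
          = ∑ c, (-(∑ p ∈ P, x (p + δ₀) c * v p c)) * u c) ∧
    (∀ p, y w' p = y w p + η • ∑ δ ∈ N, ∑ p' ∈ P, (x (p + δ) * x (p' + δ)) * v p') := by
  subst hy hL hw'
  refine ⟨fun δ₀ hδ₀ u => ?_, depthwiseConv_gradient_step P N x v w η⟩
  change fderiv ℝ (fun u' => correlationLoss P v (depthwiseConv N x (Function.update w δ₀ u')))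
    (w δ₀) u = _
  simp only [correlationLoss_depthwiseConv_update hδ₀, fderiv_dotProduct_add_const]
  simp [dotProduct, Finset.sum_apply]
end
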